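/- Let S_0 and S_1 be positive semidefinite operators on a finite-dimensional complex Hilbert space and set N := S_0 + S_1. Then there exist positive semidefinite operators Q_0 and Q_1 with Q_0 + Q_1 = 1 (the identity operator) such that √N Q_0 √N = S_0 and √N Q_1 √N = S_1. -/

import Mathlib

/-!
Let `R = √N` and let `R⁺` be its pseudoinverse, so that `P = R R⁺` is the orthogonal projection
onto the range of `N`. Since `0 ≤ Sᵢ ≤ N`, each `Sᵢ` vanishes on `ker N`, hence `P Sᵢ P = Sᵢ`,
and `Q₀ = R⁺ S₀ R⁺ + (1 - P)`, `Q₁ = R⁺ S₁ R⁺` do the job.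
-/

open scoped ComplexOrder Matrix

/-- The positive semidefinite square root of a positive semidefinite matrix
(the definition `Matrix.PosSemidef.sqrt` of the older Mathlib, since removed). -/
noncomputable def Matrix.PosSemidef.sqrt {n : Type*} [Fintype n] [DecidableEq n] {𝕜 : Type*}
    [RCLike 𝕜] {A : Matrix n n 𝕜} (hA : A.PosSemidef) : Matrix n n 𝕜 :=
  hA.1.eigenvectorUnitary.1 * Matrix.diagonal ((↑) ∘ (√·) ∘ hA.1.eigenvalues) *
  (star hA.1.eigenvectorUnitary : Matrix n n 𝕜)

namespace Matrix

variable {n 𝕜 : Type*} [Fintype n] [RCLike 𝕜]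

lemma PosSemidef.mulVec_eq_zero_of_add_mulVec_eq_zero {A B : Matrix n n 𝕜}
    (hA : A.PosSemidef) (hB : B.PosSemidef) {x : n → 𝕜} (h : (A + B) *ᵥ x = 0) :
    A *ᵥ x = 0 := by
  have hsum : star x ⬝ᵥ A *ᵥ x + star x ⬝ᵥ B *ᵥ x = 0 := by
    rw [← dotProduct_add, ← add_mulVec, h, dotProduct_zero]
  rw [← hA.dotProduct_mulVec_zero_iff]
  exact ((add_eq_zero_iff_of_nonneg (hA.dotProduct_mulVec_nonneg x)
    (hB.dotProduct_mulVec_nonneg x)).1 hsum).1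

lemma PosSemidef.mul_eq_zero_of_add_mul_eq_zero {m : Type*} [Fintype m] {A B : Matrix n n 𝕜}
    (hA : A.PosSemidef) (hB : B.PosSemidef) {X : Matrix n m 𝕜} (h : (A + B) * X = 0) :
    A * X = 0 := by
  refine ext_iff_mulVec.2 fun v => ?_
  rw [← mulVec_mulVec, zero_mulVec]
  refine hA.mulVec_eq_zero_of_add_mulVec_eq_zero hB ?_
  rw [mulVec_mulVec, h, zero_mulVec]

lemma _root_.IsStarProjection.posSemidef {P : Matrix n n 𝕜} (hP : IsStarProjection P) :
    P.PosSemidef := by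
  have : Pᴴ * P = P := by
    rw [← star_eq_conjTranspose, hP.isSelfAdjoint.star_eq, hP.isIdempotentElem.eq]
  exact this ▸ posSemidef_conjTranspose_mul_self P

variable [DecidableEq n]

lemma PosSemidef.mul_eq_self_of_mul_self_eq_add {R P S S' : Matrix n n 𝕜}
    (hS : S.PosSemidef) (hS' : S'.PosSemidef) (hRR : R * R = S + S') (hRP : R * P = R) :
    S * P = S := by
  have hker : (S + S') * (1 - P) = 0 := by
    rw [← hRR, mul_assoc, mul_sub, mul_one, hRP, sub_self, mul_zero]
  have := hS.mul_eq_zero_of_add_mul_eq_zero hS' hker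
  rwa [mul_sub, mul_one, sub_eq_zero, eq_comm] at this

lemma IsHermitian.finite_spectrum_real {A : Matrix n n 𝕜} (hA : A.IsHermitian) :
    (spectrum ℝ A).Finite :=
  hA.spectrum_real_eq_range_eigenvalues ▸ Set.finite_range _

lemma PosSemidef.sqrt_eq_cfc {A : Matrix n n 𝕜} (hA : A.PosSemidef) :
    hA.sqrt = cfc Real.sqrt A := by
  rw [hA.1.cfc_eq, IsHermitian.cfc, Unitary.conjStarAlgAut_apply]; rfl

lemma PosSemidef.isHermitian_sqrt {A : Matrix n n 𝕜} (hA : A.PosSemidef) :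
    hA.sqrt.IsHermitian :=
  hA.sqrt_eq_cfc ▸ cfc_predicate _ _

lemma PosSemidef.sqrt_mul_self {A : Matrix n n 𝕜} (hA : A.PosSemidef) :
    hA.sqrt * hA.sqrt = A := by
  have hfin := hA.1.finite_spectrum_real
  rw [hA.sqrt_eq_cfc, ← cfc_mul _ _ A (hfin.continuousOn _) (hfin.continuousOn _)]
  conv_rhs => rw [← cfc_id' ℝ A hA.1]
  refine cfc_congr ?_
  rw [hA.1.spectrum_real_eq_range_eigenvalues]
  rintro _ ⟨i, rfl⟩
  exact Real.mul_self_sqrt (hA.eigenvalues_nonneg i)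

-- As `(0 : ℝ)⁻¹ = 0`, `cfc (·⁻¹) R` is the Moore–Penrose pseudoinverse of `R`.
lemma IsHermitian.exists_pseudoinverse {R : Matrix n n 𝕜} (hR : R.IsHermitian) :
    ∃ T : Matrix n n 𝕜, T.IsHermitian ∧ Commute R T ∧ R * T * R = R := by
  have hfin := hR.finite_spectrum_real
  have hR' : cfc (fun x : ℝ => x) R = R := cfc_id' ℝ R
  refine ⟨cfc (·⁻¹ : ℝ → ℝ) R, cfc_predicate _ _,
    by simpa only [hR'] using cfc_commute_cfc (fun x : ℝ => x) (·⁻¹ : ℝ → ℝ) R, ?_⟩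
  have hRTR : cfc (fun x : ℝ => x * x⁻¹ * x) R = R := by
    simp only [mul_inv_mul_cancel]; exact hR'
  rwa [cfc_mul _ _ R (hfin.continuousOn _) (hfin.continuousOn _),
    cfc_mul _ _ R (hfin.continuousOn _) (hfin.continuousOn _), hR'] at hRTR

theorem exists_posSemidef_add_eq_one_of_mul_self_eq_add {R S₀ S₁ : Matrix n n 𝕜}
    (hR : R.IsHermitian) (h₀ : S₀.PosSemidef) (h₁ : S₁.PosSemidef) (hRR : R * R = S₀ + S₁) :
    ∃ Q₀ Q₁ : Matrix n n 𝕜, Q₀.PosSemidef ∧ Q₁.PosSemidef ∧ Q₀ + Q₁ = 1 ∧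
      R * Q₀ * R = S₀ ∧ R * Q₁ * R = S₁ := by
  obtain ⟨T, hT, hRT, hRTR⟩ := hR.exists_pseudoinverse
  have hTR : T * R = R * T := hRT.eq.symm
  have hP : IsStarProjection (R * T) :=
    ⟨by rw [IsIdempotentElem, ← mul_assoc, hRTR], (hR.commute_iff hT).1 hRT⟩
  have hRP : R * (R * T) = R := by rw [← hTR, ← mul_assoc, hRTR]
  have hfix : ∀ {S S'}, S.PosSemidef → S'.PosSemidef → R * R = S + S' →
      R * (T * S * T) * R = S := fun {S S'} hS hS' hRR' => by
    have hSP := hS.mul_eq_self_of_mul_self_eq_add hS' hRR' hRP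
    have hPS : R * T * S = S := by
      simpa only [conjTranspose_mul, hS.1.eq, hT.eq, hR.eq, hTR] using
        congrArg conjTranspose hSP
    calc R * (T * S * T) * R = R * T * S * (T * R) := by simp only [mul_assoc]
      _ = S := by rw [hTR, hPS, hSP]
  refine ⟨T * S₀ * T + (1 - R * T), T * S₁ * T, ?_, ?_, ?_, ?_, ?_⟩
  · exact .add (by simpa only [hT.eq] using h₀.conjTranspose_mul_mul_same T)
      hP.one_sub.posSemidef
  · simpa only [hT.eq] using h₁.conjTranspose_mul_mul_same T
  · calc T * S₀ * T + (1 - R * T) + T * S₁ * T = T * (R * R) * T + (1 - R * T) := by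
          rw [hRR, mul_add, add_mul]; abel
      _ = 1 := by
          rw [show T * (R * R) * T = T * R * (R * T) by simp only [mul_assoc], hTR,
            hP.isIdempotentElem.eq, add_sub_cancel]
  · rw [mul_add, add_mul, hfix h₀ h₁ hRR, mul_sub, mul_one, hRP, sub_self, zero_mul, add_zero]
  · exact hfix h₁ h₀ (hRR.trans (add_comm _ _))

end Matrix

namespace ProcessMatrices

/-- The trace norm (sum of singular values) of a complex square matrix. -/
noncomputable def traceNorm {n : Type} [Fintype n] [DecidableEq n] (X : Matrix n n ℂ) : ℝ :=
  ∑ i, Real.sqrt ((Matrix.posSemidef_conjTranspose_mul_self X).isHermitian.eigenvalues i)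

variable {aI aO bI bO : Type} [Fintype aI] [Fintype aO] [Fintype bI] [Fintype bO]
  [DecidableEq aI] [DecidableEq aO] [DecidableEq bI] [DecidableEq bO]
  [Nonempty aI] [Nonempty aO] [Nonempty bI] [Nonempty bO]

/-- `_{A_O} W = (1_{A_O}/dim A_O) ⊗ tr_{A_O} W`, as an operator on the full space. -/
noncomputable def rAO (W : Matrix (aI × aO × bI × bO) (aI × aO × bI × bO) ℂ) :
    Matrix (aI × aO × bI × bO) (aI × aO × bI × bO) ℂ := fun i j =>
  (if i.2.1 = j.2.1 then ((Fintype.card aO : ℂ))⁻¹ else 0) *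
    ∑ k : aO, W (i.1, k, i.2.2.1, i.2.2.2) (j.1, k, j.2.2.1, j.2.2.2)

/-- `_{B_O} W`. -/
noncomputable def rBO (W : Matrix (aI × aO × bI × bO) (aI × aO × bI × bO) ℂ) :
    Matrix (aI × aO × bI × bO) (aI × aO × bI × bO) ℂ := fun i j =>
  (if i.2.2.2 = j.2.2.2 then ((Fintype.card bO : ℂ))⁻¹ else 0) *
    ∑ k : bO, W (i.1, i.2.1, i.2.2.1, k) (j.1, j.2.1, j.2.2.1, k)

/-- `_{A_O B_O} W`. -/
noncomputable def rAOBO (W : Matrix (aI × aO × bI × bO) (aI × aO × bI × bO) ℂ) :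
    Matrix (aI × aO × bI × bO) (aI × aO × bI × bO) ℂ := fun i j =>
  (if i.2.1 = j.2.1 ∧ i.2.2.2 = j.2.2.2 then
      ((Fintype.card aO : ℂ) * (Fintype.card bO : ℂ))⁻¹ else 0) *
    ∑ k : aO, ∑ l : bO, W (i.1, k, i.2.2.1, l) (j.1, k, j.2.2.1, l)

/-- `_{A_I A_O} W`. -/
noncomputable def rAIAO (W : Matrix (aI × aO × bI × bO) (aI × aO × bI × bO) ℂ) :
    Matrix (aI × aO × bI × bO) (aI × aO × bI × bO) ℂ := fun i j =>
  (if i.1 = j.1 ∧ i.2.1 = j.2.1 then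
      ((Fintype.card aI : ℂ) * (Fintype.card aO : ℂ))⁻¹ else 0) *
    ∑ k : aI, ∑ l : aO, W (k, l, i.2.2.1, i.2.2.2) (k, l, j.2.2.1, j.2.2.2)

/-- `_{B_I B_O} W`. -/
noncomputable def rBIBO (W : Matrix (aI × aO × bI × bO) (aI × aO × bI × bO) ℂ) :
    Matrix (aI × aO × bI × bO) (aI × aO × bI × bO) ℂ := fun i j =>
  (if i.2.2.1 = j.2.2.1 ∧ i.2.2.2 = j.2.2.2 then
      ((Fintype.card bI : ℂ) * (Fintype.card bO : ℂ))⁻¹ else 0) *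
    ∑ k : bI, ∑ l : bO, W (i.1, i.2.1, k, l) (j.1, j.2.1, k, l)

/-- `_{A_I A_O B_O} W`. -/
noncomputable def rAIAOBO (W : Matrix (aI × aO × bI × bO) (aI × aO × bI × bO) ℂ) :
    Matrix (aI × aO × bI × bO) (aI × aO × bI × bO) ℂ := fun i j =>
  (if i.1 = j.1 ∧ i.2.1 = j.2.1 ∧ i.2.2.2 = j.2.2.2 then
      ((Fintype.card aI : ℂ) * (Fintype.card aO : ℂ) * (Fintype.card bO : ℂ))⁻¹ else 0) *
    ∑ k : aI, ∑ l : aO, ∑ m : bO, W (k, l, i.2.2.1, m) (k, l, j.2.2.1, m)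

/-- `_{A_O B_I B_O} W`. -/
noncomputable def rAOBIBO (W : Matrix (aI × aO × bI × bO) (aI × aO × bI × bO) ℂ) :
    Matrix (aI × aO × bI × bO) (aI × aO × bI × bO) ℂ := fun i j =>
  (if i.2.1 = j.2.1 ∧ i.2.2.1 = j.2.2.1 ∧ i.2.2.2 = j.2.2.2 then
      ((Fintype.card aO : ℂ) * (Fintype.card bI : ℂ) * (Fintype.card bO : ℂ))⁻¹ else 0) *
    ∑ k : aO, ∑ l : bI, ∑ m : bO, W (i.1, k, l, m) (j.1, k, l, m)

/-- `W` is a process matrix. -/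
structure IsProcessMatrix (W : Matrix (aI × aO × bI × bO) (aI × aO × bI × bO) ℂ) : Prop where
  posSemidef : W.PosSemidef
  condA : rAIAO W = rAIAOBO W
  condB : rBIBO W = rAOBIBO W
  condAB : W = rBO W + rAO W - rAOBO W
  traceEq : W.trace = (Fintype.card aO : ℂ) * (Fintype.card bO : ℂ)

/-- Partial trace over `A_O`. -/
noncomputable def ptrAO (N : Matrix (aI × aO × bI × bO) (aI × aO × bI × bO) ℂ) :
    Matrix (aI × bI × bO) (aI × bI × bO) ℂ := fun i j =>
  ∑ k : aO, N (i.1, k, i.2.1, i.2.2) (j.1, k, j.2.1, j.2.2)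

/-- Partial trace over `B_O`. -/
noncomputable def ptrBO (N : Matrix (aI × aO × bI × bO) (aI × aO × bI × bO) ℂ) :
    Matrix (aI × aO × bI) (aI × aO × bI) ℂ := fun i j =>
  ∑ k : bO, N (i.1, i.2.1, i.2.2, k) (j.1, j.2.1, j.2.2, k)

/-- Partial trace over `A_O ⊗ B_O`. -/
noncomputable def ptrAOBO (N : Matrix (aI × aO × bI × bO) (aI × aO × bI × bO) ℂ) :
    Matrix (aI × bI) (aI × bI) ℂ := fun i j =>
  ∑ k : aO, ∑ l : bO, N (i.1, k, i.2, l) (j.1, k, j.2, l)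

/-- `N` is the Choi matrix of a non-signaling channel. -/
structure MemNS (N : Matrix (aI × aO × bI × bO) (aI × aO × bI × bO) ℂ) : Prop where
  posSemidef : N.PosSemidef
  trChannel : ptrAOBO N = 1
  nsA : ∀ i j : aI × bI × bO, ptrAO N i j =
    (if i.1 = j.1 then ((Fintype.card aI : ℂ))⁻¹ else 0) *
      ∑ m : aI, ptrAO N (m, i.2.1, i.2.2) (m, j.2.1, j.2.2)
  nsB : ∀ i j : aI × aO × bI, ptrBO N i j =
    (if i.2.2 = j.2.2 then ((Fintype.card bI : ℂ))⁻¹ else 0) *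
      ∑ m : bI, ptrBO N (i.1, i.2.1, m) (j.1, j.2.1, m)

/-- `sup { ‖√N (W₀ - W₁) √N‖₁ : N ∈ NS }`. -/
noncomputable def discrBound (W0 W1 : Matrix (aI × aO × bI × bO) (aI × aO × bI × bO) ℂ) : ℝ :=
  sSup { x : ℝ | ∃ N : Matrix (aI × aO × bI × bO) (aI × aO × bI × bO) ℂ, ∃ hN : MemNS N,
    x = traceNorm (hN.posSemidef.sqrt * (W0 - W1) * hN.posSemidef.sqrt) }

/-- The optimal probability of discriminating the process matrices `W0` and `W1`
over non-signaling strategies. -/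
noncomputable def pSucc (W0 W1 : Matrix (aI × aO × bI × bO) (aI × aO × bI × bO) ℂ) : ℝ :=
  (1/2) * sSup { x : ℝ | ∃ S0 S1 : Matrix (aI × aO × bI × bO) (aI × aO × bI × bO) ℂ,
    S0.PosSemidef ∧ S1.PosSemidef ∧ MemNS (S0 + S1) ∧
    x = ((W0 * S0).trace + (W1 * S1).trace).re }

/-- `W` is a process matrix representing a quantum comb with causal order `A ≺ B`:
`W = W' ⊗ 1_{B_O}` with `tr_{B_I} W' = W'' ⊗ 1_{A_O}`. -/
def MemCombAB (W : Matrix (aI × aO × bI × bO) (aI × aO × bI × bO) ℂ) : Prop :=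
  IsProcessMatrix W ∧
  ∃ W' : Matrix (aI × aO × bI) (aI × aO × bI) ℂ,
    (∀ i j, W i j = (if i.2.2.2 = j.2.2.2 then 1 else 0) *
        W' (i.1, i.2.1, i.2.2.1) (j.1, j.2.1, j.2.2.1)) ∧
    ∃ W'' : Matrix aI aI ℂ, ∀ p q : aI × aO,
      (∑ k : bI, W' (p.1, p.2, k) (q.1, q.2, k)) = (if p.2 = q.2 then 1 else 0) * W'' p.1 q.1

/-- `W` is a process matrix representing a quantum comb with causal order `B ≺ A`:
`W = W' ⊗ 1_{A_O}` (in the `A_O` slot) with `tr_{A_I} W' = W'' ⊗ 1_{B_O}`. -/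
def MemCombBA (W : Matrix (aI × aO × bI × bO) (aI × aO × bI × bO) ℂ) : Prop :=
  IsProcessMatrix W ∧
  ∃ W' : Matrix (aI × bI × bO) (aI × bI × bO) ℂ,
    (∀ i j, W i j = (if i.2.1 = j.2.1 then 1 else 0) *
        W' (i.1, i.2.2.1, i.2.2.2) (j.1, j.2.2.1, j.2.2.2)) ∧
    ∃ W'' : Matrix bI bI ℂ, ∀ p q : bI × bO,
      (∑ k : aI, W' (k, p.1, p.2) (k, q.1, q.2)) = (if p.2 = q.2 then 1 else 0) * W'' p.1 q.1

/-- `W` is a free process matrix: `W = ρ ⊗ 1_{A_O ⊗ B_O}` for a density operator `ρ`. -/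
def MemFree (W : Matrix (aI × aO × bI × bO) (aI × aO × bI × bO) ℂ) : Prop :=
  ∃ ρ : Matrix (aI × bI) (aI × bI) ℂ, ρ.PosSemidef ∧ ρ.trace = 1 ∧
    ∀ i j, W i j = (if i.2.1 = j.2.1 ∧ i.2.2.2 = j.2.2.2 then 1 else 0) *
      ρ (i.1, i.2.2.1) (j.1, j.2.2.1)

/-- `W` is a causally separable process matrix. -/
def MemSep (W : Matrix (aI × aO × bI × bO) (aI × aO × bI × bO) ℂ) : Prop :=
  ∃ p : ℝ, 0 ≤ p ∧ p ≤ 1 ∧ ∃ W1 W2 : Matrix (aI × aO × bI × bO) (aI × aO × bI × bO) ℂ,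
    MemCombAB W1 ∧ MemCombBA W2 ∧ W = (p : ℂ) • W1 + ((1 - p : ℝ) : ℂ) • W2

/-- `(L0, L1)` is an adaptive tester for the causal order `A ≺ B`. -/
structure IsAdaptiveTester (L0 L1 : Matrix (aI × aO × bI × bO) (aI × aO × bI × bO) ℂ) :
    Prop where
  posSemidef0 : L0.PosSemidef
  posSemidef1 : L1.PosSemidef
  comb : ∃ J : Matrix (aI × aO) (aI × aO) ℂ, J.PosSemidef ∧
    (∀ p q : aI, (∑ k : aO, J (p, k) (q, k)) = if p = q then 1 else 0) ∧
    ∀ i j : aI × aO × bI, ptrBO (L0 + L1) i j =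
      (if i.2.2 = j.2.2 then 1 else 0) * J (i.1, i.2.1) (j.1, j.2.1)

/-- The optimal probability of discriminating `W0` and `W1` over adaptive testers. -/
noncomputable def pAdapt (W0 W1 : Matrix (aI × aO × bI × bO) (aI × aO × bI × bO) ℂ) : ℝ :=
  (1/2) * sSup { x : ℝ | ∃ L0 L1 : Matrix (aI × aO × bI × bO) (aI × aO × bI × bO) ℂ,
    IsAdaptiveTester L0 L1 ∧ x = ((W0 * L0).trace + (W1 * L1).trace).re }


/-- For positive semidefinite `S0, S1` with `N := S0 + S1`, there exist
positive semidefinite `Q0, Q1` with `Q0 + Q1 = 1` such that `√N Qᵢ √N = Sᵢ`. -/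
theorem statement2 {n : Type} [Fintype n] [DecidableEq n]
    (S0 S1 : Matrix n n ℂ) (h0 : S0.PosSemidef) (h1 : S1.PosSemidef) :
    ∃ Q0 Q1 : Matrix n n ℂ, Q0.PosSemidef ∧ Q1.PosSemidef ∧ Q0 + Q1 = 1 ∧
      (h0.add h1).sqrt * Q0 * (h0.add h1).sqrt = S0 ∧
      (h0.add h1).sqrt * Q1 * (h0.add h1).sqrt = S1 :=
  Matrix.exists_posSemidef_add_eq_one_of_mul_self_eq_add (h0.add h1).isHermitian_sqrt h0 h1
    (h0.add h1).sqrt_mul_self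

end ProcessMatrices
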